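/- Let d₁, d₂ ≥ 1, r ∈ [0, d₂/2), α ≥ 0 with α + 2r > (d₁+2d₂)/2, and define ϱ₂(x,y) = |x'-y'| + |x''-y''|/(|x'|+|y'|). Then there is a constant C such that for all y with y' ≠ 0, ∫ (1 + |x''-y''|/(1+|y'|))^{-2r} (1 + ϱ₂(x,y))^{-2α} dx ≤ C (1+|y'|)^{d₂}. -/

import Mathlib

/-!
Put `a = 1 + |y'|`. Since `|x'| + |y'| ≤ 2a(1 + |x'-y'|)`, the quantity `B = 1 + ϱ₂(x,y)`
dominates both `1 + |x'-y'|` and `(1 + |x''-y''|/(2a)) / (1 + |x'-y'|)`. Splitting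
`B^{-2α} = B^{-(2α-t)} B^{-t}` and bounding the two factors by these two lower bounds, the
integrand is dominated by `(1 + |x'-y'|)^{-(2α-2t)} (1 + |x''-y''|/(2a))^{-(2r+t)}`. The
hypothesis on `α + 2r` leaves room for a `t` making both exponents supercritical (`> d₁`, resp.
`> d₂`), so the product integrates to a constant times `(2a)^{d₂}`, the factor coming from the
dilation in `x''`.
-/

open MeasureTheory Real Module

lemma rpow_neg_le_rpow_neg_mul_rpow_neg {P Q B A t : ℝ} (hP : 0 < P) (hQ : 0 < Q)
    (hPB : P ≤ B) (hQB : Q ≤ P * B) (ht : 0 ≤ t) (htA : t ≤ A) :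
    B ^ (-A) ≤ P ^ (-(A - 2 * t)) * Q ^ (-t) := by
  have hB : 0 < B := hP.trans_le hPB
  have hQP : Q / P ≤ B := by rwa [div_le_iff₀' hP]
  calc B ^ (-A) = B ^ (-(A - t)) * B ^ (-t) := by rw [← rpow_add hB]; ring_nf
    _ ≤ P ^ (-(A - t)) * (Q / P) ^ (-t) :=
        mul_le_mul (rpow_le_rpow_of_nonpos hP hPB (by linarith))
          (rpow_le_rpow_of_nonpos (div_pos hQ hP) hQP (by linarith)) (by positivity)
          (by positivity)
    _ = P ^ (-(A - 2 * t)) * Q ^ (-t) := by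
        rw [div_rpow hQ.le hP.le, rpow_neg hP.le t, show -(A - 2 * t) = -(A - t) + t by ring,
          rpow_add hP]
        field_simp

lemma norm_add_norm_le_two_mul_one_add_norm_mul_one_add_norm_sub {E : Type*}
    [SeminormedAddCommGroup E] (x y : E) :
    ‖x‖ + ‖y‖ ≤ 2 * (1 + ‖y‖) * (1 + ‖x - y‖) := by
  nlinarith [norm_le_norm_add_norm_sub' x y, norm_nonneg y, norm_nonneg (x - y)]

lemma one_add_div_two_mul_le {a u s D : ℝ} (ha : 0 < a) (hu : 0 ≤ u) (hs : 0 ≤ s) (hD : 0 < D)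
    (hDa : D ≤ 2 * a * (1 + u)) :
    1 + s / (2 * a) ≤ (1 + u) * (1 + (u + s / D)) := by
  have hsD : s / (2 * a) ≤ (1 + u) * (s / D) := by
    rw [mul_div_assoc', le_div_iff₀ hD, div_mul_eq_mul_div, div_le_iff₀ (by positivity)]
    nlinarith
  nlinarith [div_nonneg hs hD.le]

lemma weight_le_mul_weight {E F : Type*} [NormedAddCommGroup E] [SeminormedAddCommGroup F]
    {r A t : ℝ} (hr : 0 ≤ r) (ht : 0 ≤ t) (htA : t ≤ A) (x y : E × F) (hy : y.1 ≠ 0) :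
    (1 + ‖x.2 - y.2‖ / (1 + ‖y.1‖)) ^ (-(2 * r)) *
        (1 + (‖x.1 - y.1‖ + ‖x.2 - y.2‖ / (‖x.1‖ + ‖y.1‖))) ^ (-A)
      ≤ (1 + ‖x.1 - y.1‖) ^ (-(A - 2 * t)) *
        (1 + ‖x.2 - y.2‖ / (2 * (1 + ‖y.1‖))) ^ (-(2 * r + t)) := by
  set a := 1 + ‖y.1‖
  set u := ‖x.1 - y.1‖
  set s := ‖x.2 - y.2‖
  set D := ‖x.1‖ + ‖y.1‖
  have ha : 0 < a := by positivity
  have hD : 0 < D := by positivity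
  have hhalf : 0 < 1 + s / (2 * a) := by positivity
  have hfirst : (1 + s / a) ^ (-(2 * r)) ≤ (1 + s / (2 * a)) ^ (-(2 * r)) := by
    refine rpow_le_rpow_of_nonpos hhalf ?_ (by linarith)
    gcongr
    linarith
  have hsecond : (1 + (u + s / D)) ^ (-A) ≤ (1 + u) ^ (-(A - 2 * t)) * (1 + s / (2 * a)) ^ (-t) :=
    rpow_neg_le_rpow_neg_mul_rpow_neg (by positivity) hhalf
      (by linarith [div_nonneg (norm_nonneg (x.2 - y.2)) hD.le])
      (one_add_div_two_mul_le ha (norm_nonneg _) (norm_nonneg _) hD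
        (norm_add_norm_le_two_mul_one_add_norm_mul_one_add_norm_sub x.1 y.1))
      ht htA
  calc _ ≤ (1 + s / (2 * a)) ^ (-(2 * r)) *
        ((1 + u) ^ (-(A - 2 * t)) * (1 + s / (2 * a)) ^ (-t)) :=
        mul_le_mul hfirst hsecond (by positivity) (by positivity)
    _ = _ := by rw [neg_add, rpow_add hhalf]; ring

section Dilation

variable {E : Type*} [NormedAddCommGroup E] [NormedSpace ℝ E] [FiniteDimensional ℝ E]
  [MeasurableSpace E] [BorelSpace E] (μ : Measure E) [μ.IsAddHaarMeasure] {c q : ℝ}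

lemma integrable_one_add_norm_sub_div_rpow_neg (hc : 0 < c) (hq : (finrank ℝ E : ℝ) < q)
    (y : E) : Integrable (fun x ↦ (1 + ‖x - y‖ / c) ^ (-q)) μ := by
  have := ((integrable_comp_smul_iff μ (fun x : E ↦ (1 + ‖x‖) ^ (-q)) (inv_ne_zero hc.ne')).2
    (integrable_one_add_norm hq)).comp_sub_right y
  simpa [norm_smul, abs_of_pos hc, div_eq_inv_mul] using this

lemma integral_one_add_norm_sub_div_rpow_neg (hc : 0 < c) (y : E) :
    ∫ x, (1 + ‖x - y‖ / c) ^ (-q) ∂μ = c ^ finrank ℝ E * ∫ x, (1 + ‖x‖) ^ (-q) ∂μ := by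
  have := Measure.integral_comp_inv_smul_of_nonneg μ (fun x : E ↦ (1 + ‖x‖) ^ (-q)) hc.le
  simp only [norm_smul, norm_inv, norm_of_nonneg hc.le, smul_eq_mul] at this
  rw [← this, ← integral_sub_right_eq_self (fun x ↦ (1 + c⁻¹ * ‖x‖) ^ (-q)) y]
  simp only [div_eq_inv_mul]

end Dilation

lemma integral_le_integral_mul_integral_of_le_mul {α β : Type*} [MeasurableSpace α]
    [MeasurableSpace β] {μ : Measure α} {ν : Measure β} [SFinite μ] [SFinite ν]
    {F : α × β → ℝ} {g : α → ℝ} {h : β → ℝ} (hF : ∀ z, 0 ≤ F z) (hg : Integrable g μ)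
    (hh : Integrable h ν) (hFgh : ∀ z, F z ≤ g z.1 * h z.2) :
    ∫ z, F z ∂μ.prod ν ≤ (∫ x, g x ∂μ) * ∫ y, h y ∂ν := by
  rw [← integral_prod_mul]
  exact integral_mono_of_nonneg (.of_forall hF) (hg.mul_prod hh) (.of_forall hFgh)

theorem weighted_integral_bound_dist_two (d₁ d₂ : ℕ)
    (r α : ℝ) (hr0 : 0 ≤ r) (hr : r < d₂ / 2)
    (hαr : (d₁ + 2 * d₂ : ℝ) / 2 < α + 2 * r) :
    ∃ C : ℝ, ∀ y : EuclideanSpace ℝ (Fin d₁) × EuclideanSpace ℝ (Fin d₂), y.1 ≠ 0 →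
      (∫ x : EuclideanSpace ℝ (Fin d₁) × EuclideanSpace ℝ (Fin d₂),
          (1 + ‖x.2 - y.2‖ / (1 + ‖y.1‖)) ^ (-(2 * r)) *
            (1 + (‖x.1 - y.1‖ + ‖x.2 - y.2‖ / (‖x.1‖ + ‖y.1‖))) ^ (-(2 * α)))
        ≤ C * (1 + ‖y.1‖) ^ (d₂ : ℝ) := by
  obtain ⟨t, ht_lo, ht_hi⟩ := exists_between (by linarith : (d₂ : ℝ) - 2 * r < α - d₁ / 2)
  have hd₁ : (0 : ℝ) ≤ d₁ := d₁.cast_nonneg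
  refine ⟨(∫ x : EuclideanSpace ℝ (Fin d₁), (1 + ‖x‖) ^ (-(2 * α - 2 * t))) *
    (∫ x : EuclideanSpace ℝ (Fin d₂), (1 + ‖x‖) ^ (-(2 * r + t))) * 2 ^ d₂, fun y hy ↦ ?_⟩
  have hc : (0 : ℝ) < 2 * (1 + ‖y.1‖) := by positivity
  have hp : (finrank ℝ (EuclideanSpace ℝ (Fin d₁)) : ℝ) < 2 * α - 2 * t := by
    rw [finrank_euclideanSpace_fin]; linarith
  have hq : (finrank ℝ (EuclideanSpace ℝ (Fin d₂)) : ℝ) < 2 * r + t := by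
    rw [finrank_euclideanSpace_fin]; linarith
  have hg := (integrable_one_add_norm (μ := volume) hp).comp_sub_right y.1
  have hh := integrable_one_add_norm_sub_div_rpow_neg volume hc hq y.2
  calc _ ≤ _ := integral_le_integral_mul_integral_of_le_mul (fun x ↦ by positivity) hg hh
        (fun x ↦ weight_le_mul_weight hr0 (by linarith) (by linarith) x y hy)
    _ = _ := by
        rw [integral_sub_right_eq_self (fun x ↦ (1 + ‖x‖) ^ (-(2 * α - 2 * t))),
          integral_one_add_norm_sub_div_rpow_neg volume hc, finrank_euclideanSpace_fin,
          rpow_natCast, mul_pow]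
        ring
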